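/- Let K be a standard unconditional convex body in ℝ^n and let i ∈ {1, …, n}. Then μ_i(K)^n · vol(K) ≥ μ_i(P_{n,i})^n · vol(P_{n,i}), and equality holds if and only if K = (1/(2μ_i(K))) · P_{n,i}. -/

import Mathlib

/-!
Let `μ = μ_i(K)`. For each `i`-set `J` of coordinates the `(n-i)`-flat `{x | x_j = 1/2, j ∈ J}`
meets `μK + ℤⁿ`, which produces a point of `K` whose `J`-coordinates all have absolute value at
least `1/(2μ)`. A convex unconditional body is solid (closed under shrinking coordinates in
absolute value), and the vertices of `P_{n,i}` are the `0/±1` vectors with at most `i` nonzero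
entries; hence `(1/(2μ)) P_{n,i} ⊆ K`. For `K = P_{n,i}` this gives `μ_i(P_{n,i}) ≥ 1/2`, and
equality holds because every `(n-i)`-flat contains a point with at most `i` nonzero coordinates,
whose rounding error lies in `½ P_{n,i}`. So
`μⁿ vol K ≥ μⁿ vol((1/(2μ)) P_{n,i}) = 2⁻ⁿ vol P_{n,i}`, and in case of equality the closed
subset `(1/(2μ)) P_{n,i}` of the convex body `K` has full measure in `K`, so it is `K`.
-/

open MeasureTheory Pointwise

/-- The integer lattice `ℤⁿ` viewed as a subset of `ℝⁿ`. -/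
def intLattice (n : ℕ) : Set (EuclideanSpace ℝ (Fin n)) :=
  {x | ∀ j, ∃ m : ℤ, x j = (m : ℝ)}

/-- The `i`-th covering minimum `μ_i(K, ℤⁿ)` of a convex body `K ⊆ ℝⁿ`:
the least `μ > 0` such that `μK + ℤⁿ` meets every `(n-i)`-dimensional affine subspace. -/
noncomputable def covMin (n i : ℕ) (K : Set (EuclideanSpace ℝ (Fin n))) : ℝ :=
  sInf {μ : ℝ | 0 < μ ∧ ∀ L : AffineSubspace ℝ (EuclideanSpace ℝ (Fin n)),
    (L : Set (EuclideanSpace ℝ (Fin n))).Nonempty →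
    Module.finrank ℝ L.direction = n - i →
    ((μ • K + intLattice n) ∩ (L : Set (EuclideanSpace ℝ (Fin n)))).Nonempty}

/-- A set `K ⊆ ℝⁿ` is standard unconditional if it is symmetric with respect to every
coordinate hyperplane, i.e. stable under all sign changes of the coordinates. -/
def StdUnconditional (n : ℕ) (K : Set (EuclideanSpace ℝ (Fin n))) : Prop :=
  ∀ x ∈ K, ∀ ε : Fin n → ℝ, (∀ j, ε j = 1 ∨ ε j = -1) →
    (WithLp.toLp 2 (fun j => ε j * x j) : EuclideanSpace ℝ (Fin n)) ∈ K

/-- The cube `C_n = [-1,1]ⁿ`. -/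
def cube (n : ℕ) : Set (EuclideanSpace ℝ (Fin n)) := {x | ∀ j, |x j| ≤ 1}

/-- The crosspolytope `C_n^⋆ = conv{±e_1, …, ±e_n}`. -/
def crosspolytope (n : ℕ) : Set (EuclideanSpace ℝ (Fin n)) := {x | ∑ j, |x j| ≤ 1}

/-- The polytope `P_{n,i} = C_n ∩ i·C_n^⋆`, interpolating between crosspolytope and cube. -/
noncomputable def Pcc (n i : ℕ) : Set (EuclideanSpace ℝ (Fin n)) :=
  cube n ∩ (i : ℝ) • crosspolytope n

open Module Submodule

section Coordinates

variable {n : ℕ}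

lemma norm_le_sqrt_of_forall_abs_le_one {x : EuclideanSpace ℝ (Fin n)} (h : ∀ j, |x j| ≤ 1) :
    ‖x‖ ≤ Real.sqrt n := by
  rw [EuclideanSpace.norm_eq]
  gcongr
  calc ∑ j, ‖x j‖ ^ 2 ≤ ∑ _j : Fin n, (1 : ℝ) := by
        gcongr with j
        rw [Real.norm_eq_abs, sq_abs, sq_le_one_iff_abs_le_one]
        exact h j
    _ = n := by simp

lemma smul_crosspolytope {r : ℝ} (hr : 0 ≤ r) :
    r • crosspolytope n = {x | ∑ j, |x j| ≤ r} := by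
  rcases hr.eq_or_lt with rfl | hr
  · rw [Set.zero_smul_set ⟨0, by simp [crosspolytope]⟩]
    ext x
    refine ⟨fun hx => by simp [Set.mem_singleton_iff.1 hx], fun hx => ?_⟩
    have hzero := (Finset.sum_eq_zero_iff_of_nonneg fun j _ => abs_nonneg (x j)).1
      (le_antisymm hx (by positivity))
    ext j
    simpa using hzero j (Finset.mem_univ j)
  · ext x
    rw [Set.mem_smul_set_iff_inv_smul_mem₀ hr.ne']
    simp only [crosspolytope, Set.mem_ofPred_eq, PiLp.smul_apply, smul_eq_mul, abs_mul,
      abs_inv, abs_of_pos hr, ← Finset.mul_sum, inv_mul_le_iff₀ hr, mul_one]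

lemma mem_Pcc_iff {i : ℕ} {x : EuclideanSpace ℝ (Fin n)} :
    x ∈ Pcc n i ↔ (∀ j, |x j| ≤ 1) ∧ ∑ j, |x j| ≤ i := by
  rw [Pcc, smul_crosspolytope (Nat.cast_nonneg i)]
  rfl

lemma isCompact_Pcc (i : ℕ) : IsCompact (Pcc n i) := by
  have hclosed : IsClosed (Pcc n i) := by
    simp only [Pcc, smul_crosspolytope (Nat.cast_nonneg i), cube, Set.ofPred_forall]
    refine (isClosed_iInter fun j => isClosed_le ?_ continuous_const).inter
      (isClosed_le ?_ continuous_const) <;> fun_prop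
  refine Metric.isCompact_of_isClosed_isBounded hclosed
    ((Metric.isBounded_closedBall (x := 0) (r := Real.sqrt n)).subset fun x hx => ?_)
  rw [mem_closedBall_zero_iff]
  exact norm_le_sqrt_of_forall_abs_le_one (mem_Pcc_iff.1 hx).1

lemma convexOn_abs_apply (j : Fin n) :
    ConvexOn ℝ Set.univ (fun x : EuclideanSpace ℝ (Fin n) => |x j|) :=
  (convexOn_norm convex_univ).comp_linearMap (EuclideanSpace.proj (𝕜 := ℝ) j).toLinearMap

lemma convex_Pcc (i : ℕ) : Convex ℝ (Pcc n i) := by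
  have hsum : ConvexOn ℝ Set.univ (fun x : EuclideanSpace ℝ (Fin n) => ∑ j, |x j|) := by
    simpa [Finset.sum_fn] using Finset.sum_induction (s := Finset.univ)
      (fun (j : Fin n) (x : EuclideanSpace ℝ (Fin n)) => |x j|) (ConvexOn ℝ Set.univ)
      (fun _ _ => ConvexOn.add) (convexOn_const 0 convex_univ) fun j _ => convexOn_abs_apply j
  simp only [Pcc, smul_crosspolytope (Nat.cast_nonneg i), cube, Set.ofPred_forall]
  exact (convex_iInter fun j => by simpa using (convexOn_abs_apply j).convex_le 1).inter
    (by simpa using hsum.convex_le (i : ℝ))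

end Coordinates

/-- The factors `y j / x j` (with `y j / 0 = 0`, harmless as then `y j = 0`) form a point of the
cube `[-1, 1]ⁿ`, the convex hull of the sign vectors. -/
theorem StdUnconditional.mem_of_abs_le {n : ℕ} {K : Set (EuclideanSpace ℝ (Fin n))}
    (hu : StdUnconditional n K) (hK : Convex ℝ K) {x y : EuclideanSpace ℝ (Fin n)}
    (hx : x ∈ K) (hyx : ∀ j, |y j| ≤ |x j|) : y ∈ K := by
  let scale : (Fin n → ℝ) →ₗ[ℝ] EuclideanSpace ℝ (Fin n) :=
    { toFun := fun t => WithLp.toLp 2 fun j => t j * x j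
      map_add' := fun s t => by ext j; simp [add_mul]
      map_smul' := fun a t => by ext j; simp [mul_assoc] }
  let signs : Set (Fin n → ℝ) := Set.univ.pi fun _ => {1, -1}
  have hsigns : scale '' signs ⊆ K := by
    rintro _ ⟨ε, hε, rfl⟩
    exact hu x hx ε fun j => hε j (Set.mem_univ j)
  have hcube : Set.univ.pi (fun _ => Set.Icc (-1 : ℝ) 1) = convexHull ℝ signs := by
    simp only [signs, convexHull_pi, convexHull_pair, segment_symm ℝ (1 : ℝ),
      segment_eq_Icc (by norm_num : (-1 : ℝ) ≤ 1)]
  let t : Fin n → ℝ := fun j => y j / x j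
  have ht : t ∈ convexHull ℝ signs := by
    rw [← hcube]
    intro j _
    exact abs_le.1 (by simpa [t, abs_div] using div_le_one_of_le₀ (hyx j) (abs_nonneg (x j)))
  have hy : y = scale t := by
    ext j
    rcases eq_or_ne (x j) 0 with hxj | hxj
    · simpa [scale, t, hxj] using hyx j
    · simp [scale, t, div_mul_cancel₀ _ hxj]
  rw [hy]
  exact convexHull_min hsigns hK (scale.image_convexHull signs ▸ Set.mem_image_of_mem scale ht)

section NonnegPart

variable {n i : ℕ}

def nonnegPcc (n i : ℕ) : Set (EuclideanSpace ℝ (Fin n)) :=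
  Pcc n i ∩ {x | ∀ j, 0 ≤ x j}

lemma mem_nonnegPcc_iff {x : EuclideanSpace ℝ (Fin n)} :
    x ∈ nonnegPcc n i ↔ (∀ j, 0 ≤ x j ∧ x j ≤ 1) ∧ ∑ j, x j ≤ i := by
  simp only [nonnegPcc, Set.mem_inter_iff, mem_Pcc_iff, Set.mem_ofPred_eq]
  constructor
  · rintro ⟨⟨hle, hsum⟩, hnonneg⟩
    refine ⟨fun j => ⟨hnonneg j, ?_⟩, ?_⟩
    · simpa [abs_of_nonneg (hnonneg j)] using hle j
    · simpa [abs_of_nonneg (hnonneg _)] using hsum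
  · rintro ⟨hbox, hsum⟩
    refine ⟨⟨fun j => ?_, ?_⟩, fun j => (hbox j).1⟩
    · rw [abs_of_nonneg (hbox j).1]; exact (hbox j).2
    · simpa [abs_of_nonneg (hbox _).1] using hsum

lemma add_mem_nonnegPcc {x d : EuclideanSpace ℝ (Fin n)}
    (hd : ∀ j, |d j| ≤ min (x j) (1 - x j)) (hsum : |∑ j, d j| ≤ i - ∑ j, x j) :
    x + d ∈ nonnegPcc n i := by
  refine mem_nonnegPcc_iff.2 ⟨fun j => ?_, ?_⟩
  · have := abs_le.1 ((hd j).trans (min_le_left _ _))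
    have := abs_le.1 ((hd j).trans (min_le_right _ _))
    simp only [PiLp.add_apply]
    constructor <;> linarith
  · simp only [PiLp.add_apply, Finset.sum_add_distrib]
    linarith [le_abs_self (∑ j, d j)]

/-- A fractional coordinate can be moved in both directions, together with a second fractional
coordinate when the sum constraint is tight (otherwise the other coordinates sum to an integer). -/
theorem eq_zero_or_eq_one_of_mem_extremePoints_nonnegPcc {x : EuclideanSpace ℝ (Fin n)}
    (hx : x ∈ (nonnegPcc n i).extremePoints ℝ) (j : Fin n) : x j = 0 ∨ x j = 1 := by
  classical
  obtain ⟨hbox, hsum⟩ := mem_nonnegPcc_iff.1 hx.1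
  have frac : ∀ k, x k ≠ 0 → x k ≠ 1 → 0 < min (x k) (1 - x k) := fun k h0 h1 =>
    lt_min ((hbox k).1.lt_of_ne' h0) (sub_pos.2 ((hbox k).2.lt_of_ne h1))
  by_contra! hj
  suffices ∃ d : EuclideanSpace ℝ (Fin n), d ≠ 0 ∧ (∀ m, |d m| ≤ min (x m) (1 - x m)) ∧
      |∑ m, d m| ≤ i - ∑ m, x m by
    obtain ⟨d, hd0, hd, hdsum⟩ := this
    have hplus := add_mem_nonnegPcc hd hdsum
    have hminus := add_mem_nonnegPcc (d := -d) (by simpa using hd) (by simpa using hdsum)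
    rw [← sub_eq_add_neg] at hminus
    exact hd0 (sub_eq_self.1 (hx.2 hminus hplus (mem_openSegment_sub_add x d)))
  by_cases hk : ∃ k ≠ j, x k ≠ 0 ∧ x k ≠ 1
  · obtain ⟨k, hkj, hk0, hk1⟩ := hk
    set δ := min (min (x j) (1 - x j)) (min (x k) (1 - x k))
    have hδ : 0 < δ := lt_min (frac j hj.1 hj.2) (frac k hk0 hk1)
    have hδj : δ ≤ min (x j) (1 - x j) := min_le_left _ _
    have hδk : δ ≤ min (x k) (1 - x k) := min_le_right _ _
    refine ⟨EuclideanSpace.single j δ - EuclideanSpace.single k δ, fun h => ?_, fun m => ?_,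
      ?_⟩
    · simpa [hkj.symm, hδ.ne'] using congrArg (· j) h
    · by_cases hmj : m = j
      · subst hmj
        simpa [hkj.symm, abs_of_pos hδ] using hδj
      · by_cases hmk : m = k
        · subst hmk
          simpa [hmj, abs_of_pos hδ] using hδk
        · simpa [hmj, hmk] using le_min (hbox m).1 (sub_nonneg.2 (hbox m).2)
    · simpa using sub_nonneg.2 hsum
  · have hrest : ∀ k ≠ j, x k = 0 ∨ x k = 1 := fun k hkj => by
      by_contra! h
      exact hk ⟨k, hkj, h⟩
    have hlt : ∑ m, x m < i := by
      set N := ((Finset.univ.erase j).filter fun m => x m = 1).card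
      have hN : ∑ m, x m = x j + N := by
        rw [← Finset.add_sum_erase _ _ (Finset.mem_univ j), Finset.natCast_card_filter]
        congr 1
        refine Finset.sum_congr rfl fun m hm => ?_
        rcases hrest m (Finset.ne_of_mem_erase hm) with h | h <;> simp [h]
      refine hsum.lt_of_ne fun heq => ?_
      have h0 := frac j hj.1 hj.2
      have h1 : (N : ℝ) < i := by linarith [min_le_left (x j) (1 - x j)]
      have h2 : (i : ℝ) < N + 1 := by linarith [min_le_right (x j) (1 - x j)]
      have : N < i := by exact_mod_cast h1
      have : i < N + 1 := by exact_mod_cast h2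
      omega
    set δ := min (min (x j) (1 - x j)) (i - ∑ m, x m)
    have hδ : 0 < δ := lt_min (frac j hj.1 hj.2) (sub_pos.2 hlt)
    have hδj : δ ≤ min (x j) (1 - x j) := min_le_left _ _
    have hδsum : δ ≤ i - ∑ m, x m := min_le_right _ _
    refine ⟨EuclideanSpace.single j δ, fun h => ?_, fun m => ?_, ?_⟩
    · simpa [hδ.ne'] using congrArg (· j) h
    · by_cases hmj : m = j
      · subst hmj
        simpa [abs_of_pos hδ] using hδj
      · simpa [hmj] using le_min (hbox m).1 (sub_nonneg.2 (hbox m).2)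
    · simpa [abs_of_pos hδ] using hδsum

lemma isCompact_nonnegPcc (n i : ℕ) : IsCompact (nonnegPcc n i) := by
  refine (isCompact_Pcc i).inter_right ?_
  simp only [Set.ofPred_forall]
  exact isClosed_iInter fun j => isClosed_le continuous_const (by fun_prop)

lemma convex_nonnegPcc (n i : ℕ) : Convex ℝ (nonnegPcc n i) := by
  refine (convex_Pcc i).inter ?_
  simp only [Set.ofPred_forall]
  exact convex_iInter fun j => convex_halfSpace_ge (EuclideanSpace.proj (𝕜 := ℝ) j).isLinear 0

end NonnegPart

/-- By Krein–Milman it suffices to place `c` times each vertex of `nonnegPcc n i` into `K`;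
such a vertex is the indicator of at most `i` coordinates. -/
theorem smul_Pcc_subset_of_forall_exists_le_abs {n i : ℕ} {K : Set (EuclideanSpace ℝ (Fin n))}
    (hKc : IsClosed K) (hK : Convex ℝ K) (hu : StdUnconditional n K) (hi : i ≤ n) {c : ℝ}
    (hc : 0 ≤ c) (hlarge : ∀ J : Finset (Fin n), J.card = i → ∃ y ∈ K, ∀ j ∈ J, c ≤ |y j|) :
    c • Pcc n i ⊆ K := by
  classical
  have hvert : (nonnegPcc n i).extremePoints ℝ ⊆ (c • ·) ⁻¹' K := by
    intro x hx
    have hbin := eq_zero_or_eq_one_of_mem_extremePoints_nonnegPcc hx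
    set J₀ := Finset.univ.filter fun j => x j = 1
    have hJ₀ : J₀.card ≤ i := by
      have hsum := (mem_nonnegPcc_iff.1 hx.1).2
      rw [← Finset.sum_filter_add_sum_filter_not Finset.univ (fun j => x j = 1),
        Finset.sum_congr rfl fun j hj => (Finset.mem_filter.1 hj).2,
        Finset.sum_eq_zero fun j hj => (hbin j).resolve_right (Finset.mem_filter.1 hj).2]
        at hsum
      exact_mod_cast (by simpa using hsum : (J₀.card : ℝ) ≤ i)
    obtain ⟨J, hJ₀J, hJ⟩ := Finset.exists_superset_card_eq hJ₀ (by simpa using hi)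
    obtain ⟨y, hyK, hy⟩ := hlarge J hJ
    refine hu.mem_of_abs_le hK hyK fun j => ?_
    rcases hbin j with h | h
    · simp [h]
    · simpa [h, abs_of_nonneg hc] using hy j (hJ₀J (by simp [J₀, h]))
  have hQ : nonnegPcc n i ⊆ (c • ·) ⁻¹' K := by
    rw [← closure_convexHull_extremePoints (isCompact_nonnegPcc n i) (convex_nonnegPcc n i)]
    exact closure_minimal (convexHull_min hvert (hK.linear_preimage (LinearMap.lsmul ℝ _ c)))
      (hKc.preimage (continuous_const_smul c))
  rintro _ ⟨w, hw, rfl⟩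
  have hw' := mem_Pcc_iff.1 hw
  have habs : (WithLp.toLp 2 fun j => |w j| : EuclideanSpace ℝ (Fin n)) ∈ nonnegPcc n i :=
    mem_nonnegPcc_iff.2 ⟨fun j => ⟨abs_nonneg _, hw'.1 j⟩, hw'.2⟩
  exact hu.mem_of_abs_le hK (hQ habs) fun j => by simp [abs_mul]

/-- Choose basis vectors whose classes in `V ⧸ D` are linearly independent and span. -/
theorem Module.Basis.exists_finset_card_le_sup_span_image_eq_top {ι K V : Type*} [Field K]
    [AddCommGroup V] [Module K V] [FiniteDimensional K V] (b : Basis ι K V) (D : Submodule K V) :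
    ∃ T : Finset ι, T.card ≤ finrank K (V ⧸ D) ∧ D ⊔ span K (b '' T) = ⊤ := by
  obtain ⟨κ, a, ha, hspan, hli⟩ := exists_linearIndependent' K (D.mkQ ∘ b)
  have : Finite ι := Module.Finite.finite_basis b
  have : Finite κ := _root_.Finite.of_injective a ha
  have : Fintype κ := Fintype.ofFinite κ
  refine ⟨Finset.univ.map ⟨a, ha⟩, ?_, ?_⟩
  · simpa using hli.fintype_card_le_finrank
  · rw [← Submodule.map_mkQ_eq_top, Submodule.map_span, Finset.coe_map, Finset.coe_univ,
      Set.image_univ, ← Set.image_comp, Function.Embedding.coeFn_mk, ← Set.range_comp,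
      hspan, Set.range_comp, Submodule.span_image, b.span_eq, Submodule.map_top,
      Submodule.range_mkQ]

lemma Module.Basis.finrank_span_image {ι K V : Type*} [Field K] [AddCommGroup V]
    [Module K V] (b : Basis ι K V) (T : Finset ι) : finrank K (span K (b '' T)) = T.card := by
  rw [Set.image_eq_range]
  exact (finrank_span_eq_card (b.linearIndependent.comp _ Subtype.val_injective)).trans (by simp)

section CoveringMinimum

variable {n i : ℕ} {K : Set (EuclideanSpace ℝ (Fin n))}

/-- `covMin n i K` is `sInf (covSet n i K)` by definition. -/
def covSet (n i : ℕ) (K : Set (EuclideanSpace ℝ (Fin n))) : Set ℝ :=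
  {μ : ℝ | 0 < μ ∧ ∀ L : AffineSubspace ℝ (EuclideanSpace ℝ (Fin n)),
    (L : Set (EuclideanSpace ℝ (Fin n))).Nonempty →
    Module.finrank ℝ L.direction = n - i →
    ((μ • K + intLattice n) ∩ (L : Set (EuclideanSpace ℝ (Fin n)))).Nonempty}

lemma bddBelow_covSet : BddBelow (covSet n i K) := ⟨0, fun _ hμ => hμ.1.le⟩

lemma apply_eq_zero_of_mem_span_basisFun_image {S : Set (Fin n)}
    {v : EuclideanSpace ℝ (Fin n)}
    (hv : v ∈ span ℝ ((EuclideanSpace.basisFun (Fin n) ℝ).toBasis '' S)) {j : Fin n}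
    (hj : j ∉ S) : v j = 0 := by
  rw [Basis.mem_span_image] at hv
  by_contra h
  exact hj (hv (by simpa using h))

/-- The flat `{x | x_j = 1/2 for j ∈ J}` meets `μK + ℤⁿ`, and a lattice translate of `1/2` has
absolute value at least `1/2`. -/
theorem exists_mem_le_abs_of_mem_covSet {μ : ℝ} (hμ : μ ∈ covSet n i K) {J : Finset (Fin n)}
    (hJ : J.card = i) : ∃ y ∈ K, ∀ j ∈ J, 1 / (2 * μ) ≤ |y j| := by
  classical
  set b := (EuclideanSpace.basisFun (Fin n) ℝ).toBasis
  let p₀ : EuclideanSpace ℝ (Fin n) := WithLp.toLp 2 fun j => if j ∈ J then 1 / 2 else 0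
  let L := AffineSubspace.mk' p₀ (span ℝ (b '' ↑Jᶜ))
  have hL : finrank ℝ L.direction = n - i := by
    rw [AffineSubspace.direction_mk', b.finrank_span_image, Finset.card_compl, hJ,
      Fintype.card_fin]
  obtain ⟨w, ⟨_, ⟨y, hy, rfl⟩, z, hz, rfl⟩, hwL⟩ :=
    hμ.2 L ⟨p₀, AffineSubspace.self_mem_mk' _ _⟩ hL
  refine ⟨y, hy, fun j hj => ?_⟩
  have hwj : μ * y j + z j = 1 / 2 := by
    have := apply_eq_zero_of_mem_span_basisFun_image (AffineSubspace.mem_mk'.1 hwL)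
      (j := j) (by simpa using hj)
    simpa [p₀, hj, sub_eq_zero] using this
  obtain ⟨m, hm⟩ := hz j
  have hhalf : 1 / 2 ≤ |1 / 2 - (m : ℝ)| := by
    rcases le_or_gt m 0 with h | h
    · have : (m : ℝ) ≤ 0 := by exact_mod_cast h
      rw [abs_of_pos (by linarith)]; linarith
    · have : (1 : ℝ) ≤ m := by exact_mod_cast h
      rw [abs_of_neg (by linarith)]; linarith
  have hμy : μ * y j = 1 / 2 - m := by rw [← hm]; linarith
  rw [← hμy, abs_mul, abs_of_pos hμ.1] at hhalf
  rw [div_le_iff₀ (by linarith [hμ.1])]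
  linarith

/-- An `(n-i)`-flat meets a coordinate subspace of dimension at most `i`; the rounding error of
the meeting point lies in `½ P_{n,i}`. -/
theorem half_mem_covSet_Pcc (hi : i ≤ n) : (1 / 2 : ℝ) ∈ covSet n i (Pcc n i) := by
  classical
  refine ⟨by norm_num, fun L ⟨p, hp⟩ hL => ?_⟩
  set b := (EuclideanSpace.basisFun (Fin n) ℝ).toBasis
  obtain ⟨T, hTcard, hT⟩ := b.exists_finset_card_le_sup_span_image_eq_top L.direction
  have hTi : T.card ≤ i := by
    have := L.direction.finrank_quotient_add_finrank
    rw [hL, finrank_euclideanSpace_fin] at this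
    omega
  obtain ⟨d, hd, t, ht, rfl⟩ := Submodule.mem_sup.1 (hT ▸ Submodule.mem_top (x := p))
  have htL : t ∈ L := by
    simpa using AffineSubspace.vadd_mem_of_mem_direction (L.direction.neg_mem hd) hp
  have ht0 : ∀ j ∉ T, t j = 0 := fun j hj =>
    apply_eq_zero_of_mem_span_basisFun_image ht (by simpa using hj)
  let y : EuclideanSpace ℝ (Fin n) := WithLp.toLp 2 fun j => 2 * (t j - round (t j))
  have hy : ∀ j, |y j| ≤ if j ∈ T then 1 else 0 := fun j => by
    by_cases hj : j ∈ T
    · simpa [y, hj, abs_mul] using mul_le_mul_of_nonneg_left (abs_sub_round (t j)) zero_le_two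
    · simp [y, hj, ht0 j hj]
  have hyP : y ∈ Pcc n i := by
    refine mem_Pcc_iff.2 ⟨fun j => (hy j).trans (by split_ifs <;> norm_num), ?_⟩
    calc ∑ j, |y j| ≤ ∑ j, (if j ∈ T then 1 else 0 : ℝ) := Finset.sum_le_sum fun j _ => hy j
      _ = T.card := by simp
      _ ≤ i := by exact_mod_cast hTi
  refine ⟨t, ⟨(1 / 2 : ℝ) • y, Set.smul_mem_smul_set hyP,
    WithLp.toLp 2 fun j => (round (t j) : ℝ), fun j => ⟨round (t j), rfl⟩, ?_⟩, htL⟩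
  ext j
  simp [y]

/-- `μK` contains a ball of radius `√n + 1 > √n`, so `μK + ℤⁿ` is all of `ℝⁿ`. -/
theorem covSet_nonempty_of_ball_subset {x₀ : EuclideanSpace ℝ (Fin n)} {r : ℝ} (hr : 0 < r)
    (hball : Metric.ball x₀ r ⊆ K) : (covSet n i K).Nonempty := by
  set μ := (Real.sqrt n + 1) / r
  have hμ : 0 < μ := by positivity
  refine ⟨μ, hμ, fun L ⟨p, hp⟩ _ => ⟨p, ?_, hp⟩⟩
  let v := p - μ • x₀
  let e : EuclideanSpace ℝ (Fin n) := WithLp.toLp 2 fun j => v j - round (v j)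
  have he : ‖e‖ < μ * r := by
    rw [div_mul_cancel₀ _ hr.ne']
    exact (norm_le_sqrt_of_forall_abs_le_one fun j =>
      (abs_sub_round (v j)).trans (by norm_num)).trans_lt (lt_add_one _)
  have hyK : x₀ + μ⁻¹ • e ∈ K := by
    refine hball ?_
    rw [Metric.mem_ball, dist_eq_norm, add_sub_cancel_left, norm_smul, Real.norm_eq_abs,
      abs_inv, abs_of_pos hμ, inv_mul_lt_iff₀ hμ]
    exact he
  refine ⟨μ • (x₀ + μ⁻¹ • e), Set.smul_mem_smul_set hyK,
    WithLp.toLp 2 fun j => (round (v j) : ℝ), fun j => ⟨round (v j), rfl⟩, ?_⟩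
  ext j
  simp [e, v, smul_add, smul_smul, mul_inv_cancel₀ hμ.ne']
  ring

theorem one_div_two_mul_le_covMin (hi1 : 1 ≤ i) (hi2 : i ≤ n)
    (hne : (covSet n i K).Nonempty) {R : ℝ} (hR : 0 < R) (hK : ∀ y ∈ K, ∀ j, |y j| ≤ R) :
    1 / (2 * R) ≤ covMin n i K := by
  refine le_csInf hne fun μ hμ => ?_
  obtain ⟨J, -, hJ⟩ := Finset.exists_subset_card_eq
    (by simpa using hi2 : i ≤ (Finset.univ : Finset (Fin n)).card)
  obtain ⟨j, hj⟩ := Finset.card_pos.1 (hJ ▸ hi1)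
  obtain ⟨y, hy, hlarge⟩ := exists_mem_le_abs_of_mem_covSet hμ hJ
  have := (hlarge j hj).trans (hK y hy j)
  rw [div_le_iff₀ (by linarith [hμ.1])] at this
  rw [div_le_iff₀ (by positivity)]
  linarith

theorem covMin_Pcc (hi1 : 1 ≤ i) (hi2 : i ≤ n) : covMin n i (Pcc n i) = 1 / 2 := by
  refine le_antisymm (csInf_le bddBelow_covSet (half_mem_covSet_Pcc hi2)) ?_
  simpa using one_div_two_mul_le_covMin hi1 hi2 ⟨_, half_mem_covSet_Pcc hi2⟩ one_pos
    fun y hy => (mem_Pcc_iff.1 hy).1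

theorem covMin_pos (hi1 : 1 ≤ i) (hi2 : i ≤ n) (hK : Bornology.IsBounded K)
    (hne : (covSet n i K).Nonempty) : 0 < covMin n i K := by
  obtain ⟨R, hR, hKR⟩ := hK.exists_pos_norm_le
  exact (by positivity : (0 : ℝ) < 1 / (2 * R)).trans_le <| one_div_two_mul_le_covMin hi1 hi2
    hne hR fun y hy j => (PiLp.norm_apply_le y j).trans (hKR y hy)

/-- Each admissible `μ` gives `(1/(2μ)) P_{n,i} ⊆ K`; pass to the limit `μ → covMin n i K`. -/
theorem one_div_two_mul_covMin_smul_Pcc_subset (hKc : IsClosed K) (hK : Convex ℝ K)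
    (hu : StdUnconditional n K) (hi : i ≤ n) (hne : (covSet n i K).Nonempty)
    (hpos : 0 < covMin n i K) : (1 / (2 * covMin n i K)) • Pcc n i ⊆ K := by
  rintro _ ⟨w, hw, rfl⟩
  have hadm : ∀ μ ∈ covSet n i K, (1 / (2 * μ)) • w ∈ K := fun μ hμ =>
    smul_Pcc_subset_of_forall_exists_le_abs hKc hK hu hi
      (one_div_pos.2 (mul_pos two_pos hμ.1)).le
      (fun J hJ => exists_mem_le_abs_of_mem_covSet hμ hJ) (Set.smul_mem_smul_set hw)
  have hcont : ContinuousAt (fun μ : ℝ => (1 / (2 * μ)) • w) (covMin n i K) :=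
    (continuousAt_const.div (continuousAt_const.mul continuousAt_id)
      (mul_pos two_pos hpos).ne').smul continuousAt_const
  exact hKc.closure_subset_iff.2 (Set.image_subset_iff.2 hadm)
    (mem_closure_image hcont (csInf_mem_closure hne bddBelow_covSet))

end CoveringMinimum

/-- The open set `interior K \ C` is null, hence empty, and `K` lies in the closure of its
interior. -/
theorem Convex.eq_of_subset_of_measure_le {E : Type*} [AddCommGroup E] [Module ℝ E]
    [TopologicalSpace E] [IsTopologicalAddGroup E] [ContinuousSMul ℝ E] [MeasurableSpace E]
    [OpensMeasurableSpace E] (μ : Measure E) [μ.IsOpenPosMeasure] {K C : Set E}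
    (hK : Convex ℝ K) (hKint : (interior K).Nonempty) (hC : IsClosed C) (hCK : C ⊆ K)
    (hCfin : μ C ≠ ⊤) (hle : μ K ≤ μ C) : K = C := by
  have hnull : μ (K \ C) = 0 := by
    rw [measure_sdiff hCK hC.measurableSet.nullMeasurableSet hCfin]
    exact tsub_eq_zero_of_le hle
  have hint : interior K ⊆ C := fun x hx => by
    by_contra hxC
    exact ((isOpen_interior.sdiff hC).measure_pos μ ⟨x, hx, hxC⟩).ne'
      (measure_mono_null (Set.sdiff_subset_sdiff_left interior_subset) hnull)
  refine (subset_closure.trans ?_).antisymm hCK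
  rw [← hK.closure_interior_eq_closure_of_nonempty_interior hKint]
  exact closure_minimal hint hC

theorem covMin_pow_mul_volume_ge_of_unconditional_general (n : ℕ)
    (K : Set (EuclideanSpace ℝ (Fin n)))
    (hKcpt : IsCompact K) (hKconv : Convex ℝ K) (hKint : (interior K).Nonempty)
    (hKuncond : StdUnconditional n K) (i : ℕ) (hi1 : 1 ≤ i) (hi2 : i ≤ n) :
    covMin n i K ^ n * (volume K).toReal ≥
      covMin n i (Pcc n i) ^ n * (volume (Pcc n i)).toReal ∧
    (covMin n i K ^ n * (volume K).toReal =
        covMin n i (Pcc n i) ^ n * (volume (Pcc n i)).toReal ↔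
      K = (1 / (2 * covMin n i K)) • Pcc n i) := by
  obtain ⟨r, hr, hball⟩ := Metric.isOpen_iff.1 isOpen_interior _ hKint.some_mem
  have hne := covSet_nonempty_of_ball_subset (i := i) hr (hball.trans interior_subset)
  have hpos := covMin_pos hi1 hi2 hKcpt.isBounded hne
  set m := covMin n i K
  set C := (1 / (2 * m)) • Pcc n i
  have hCK : C ⊆ K :=
    one_div_two_mul_covMin_smul_Pcc_subset hKcpt.isClosed hKconv hKuncond hi2 hne hpos
  have hvolC : m ^ n * (volume C).toReal =
      covMin n i (Pcc n i) ^ n * (volume (Pcc n i)).toReal := by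
    rw [Measure.addHaar_smul_of_nonneg _ (by positivity), finrank_euclideanSpace_fin,
      ENNReal.toReal_mul, ENNReal.toReal_ofReal (by positivity), ← mul_assoc, ← mul_pow,
      covMin_Pcc hi1 hi2]
    field_simp
  have hKfin : volume K ≠ ⊤ := hKcpt.measure_lt_top.ne
  have hCfin : volume C ≠ ⊤ := ne_top_of_le_ne_top hKfin (measure_mono hCK)
  have hmn : 0 < m ^ n := pow_pos hpos n
  rw [← hvolC]
  refine ⟨mul_le_mul_of_nonneg_left (ENNReal.toReal_mono hKfin (measure_mono hCK)) hmn.le,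
    fun h => ?_, fun h => by rw [← h]⟩
  have hvol := (ENNReal.toReal_le_toReal hKfin hCfin).1 (mul_left_cancel₀ hmn.ne' h).le
  have hCclosed : IsClosed C := ((isCompact_Pcc i).smul _).isClosed
  exact hKconv.eq_of_subset_of_measure_le volume hKint hCclosed hCK hCfin hvol

/-- For a standard unconditional convex body `K` in `ℝⁿ` and `1 ≤ i ≤ n`, one has
`μ_i(K)ⁿ·vol(K) ≥ μ_i(P_{n,i})ⁿ·vol(P_{n,i})`, with equality if and only if
`K = (1/(2μ_i(K)))·P_{n,i}`. -/
theorem covMin_pow_mul_volume_ge_of_unconditional (n : ℕ) (hn : 1 ≤ n)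
    (K : Set (EuclideanSpace ℝ (Fin n)))
    (hKcpt : IsCompact K) (hKconv : Convex ℝ K) (hKint : (interior K).Nonempty)
    (hKuncond : StdUnconditional n K) (i : ℕ) (hi1 : 1 ≤ i) (hi2 : i ≤ n) :
    covMin n i K ^ n * (volume K).toReal ≥
      covMin n i (Pcc n i) ^ n * (volume (Pcc n i)).toReal ∧
    (covMin n i K ^ n * (volume K).toReal =
        covMin n i (Pcc n i) ^ n * (volume (Pcc n i)).toReal ↔
      K = (1 / (2 * covMin n i K)) • Pcc n i) :=
  covMin_pow_mul_volume_ge_of_unconditional_general n K hKcpt hKconv hKint hKuncond i hi1 hi2
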